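/- Let n ≥ 2 and let h : ℝ^n → ℝ be continuous and convex on Δ_n, twice continuously differentiable on an open set U ⊆ ℝ^n containing Δ_n°, with Hessian ∇²h(x) positive definite for every x ∈ Δ_n°. Let M := {P_H ∇h(x) : x ∈ Δ_n°}. Then: (i) the map x ↦ P_H ∇h(x) is a bijection from Δ_n° onto M; and (ii) for every z ∈ M, the function x ↦ ⟨x, z⟩ − h(x) has a unique maximizer over Δ_n, this maximizer lies in Δ_n°, and it is exactly the unique x ∈ Δ_n° with P_H ∇h(x) = z. -/

import Mathlib

open Matrix MeasureTheory

noncomputable section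

/-- The standard probability simplex in `ℝ^n`. -/
def simplex (n : ℕ) : Set (Fin n → ℝ) := {x | (∀ i, 0 ≤ x i) ∧ ∑ i, x i = 1}

/-- The relative interior of the standard probability simplex. -/
def simplexInt (n : ℕ) : Set (Fin n → ℝ) := {x | (∀ i, 0 < x i) ∧ ∑ i, x i = 1}

/-- The all-ones vector `𝟙`. -/
def ones (n : ℕ) : Fin n → ℝ := fun _ => 1

/-- The orthogonal projection matrix `P_H = I - (1/n) 𝟙 𝟙ᵀ` onto `H = {z : ∑ i, z i = 0}`. -/
def PH (n : ℕ) : Matrix (Fin n) (Fin n) ℝ :=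
  1 - (n : ℝ)⁻¹ • Matrix.of fun _ _ => (1 : ℝ)

/-- The gradient (vector of partial derivatives) of `h`. -/
def grad {n : ℕ} (h : (Fin n → ℝ) → ℝ) (x : Fin n → ℝ) : Fin n → ℝ :=
  fun i => fderiv ℝ h x (Pi.single i 1)

/-- The Hessian matrix of `h`. -/
def hess {n : ℕ} (h : (Fin n → ℝ) → ℝ) (x : Fin n → ℝ) : Matrix (Fin n) (Fin n) ℝ :=
  Matrix.of fun i j =>
    fderiv ℝ (fun y => fderiv ℝ h y (Pi.single j 1)) x (Pi.single i 1)

/-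
If `x₀ ∈ Δ°` and `z = P_H ∇h(x₀)`, then `x - x₀ ∈ H` for every `x ∈ Δ`, so
`⟪∇h(x₀), x - x₀⟫ = ⟪z, x - x₀⟫` and the first-order inequality of the convex function `h`
says exactly that `x₀` maximizes `x ↦ ⟪x, z⟫ - h x` over `Δ`. A positive definite Hessian makes
`h` strictly convex on `Δ°` (along every segment the second derivative is positive). If `x ∈ Δ`
is another maximizer, concavity makes the midpoint of `x₀` and `x`, which lies in `Δ°`, a
maximizer too, and strict concavity on `Δ°` then forces `x = x₀`. Injectivity of
`x ↦ P_H ∇h(x)` is the special case `x ∈ Δ°`.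
-/

lemma ContinuousLinearMap.apply_eq_dotProduct {ι : Type*} [Fintype ι] [DecidableEq ι]
    (L : (ι → ℝ) →L[ℝ] ℝ) (d : ι → ℝ) : L d = d ⬝ᵥ fun i => L (Pi.single i 1) := by
  conv_lhs => rw [← Finset.univ_sum_single d]
  refine (map_sum L _ _).trans (Finset.sum_congr rfl fun i _ => ?_)
  rw [← smul_eq_mul, ← map_smul, ← Pi.single_smul', smul_eq_mul, mul_one]

lemma fderiv_apply_eq_dotProduct_grad {n : ℕ} (h : (Fin n → ℝ) → ℝ) (x d : Fin n → ℝ) :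
    fderiv ℝ h x d = d ⬝ᵥ grad h x :=
  (fderiv ℝ h x).apply_eq_dotProduct d

lemma dotProduct_hess_mulVec {n : ℕ} {h : (Fin n → ℝ) → ℝ} {y : Fin n → ℝ}
    (hh : DifferentiableAt ℝ (fderiv ℝ h) y) (d : Fin n → ℝ) :
    d ⬝ᵥ (hess h y *ᵥ d) = fderiv ℝ (fderiv ℝ h) y d d := by
  set B := fderiv ℝ (fderiv ℝ h) y
  have hess_eq : ∀ i j, hess h y i j = B (Pi.single i 1) (Pi.single j 1) := fun i j => by
    simp [hess, B, fderiv_clm_apply hh (differentiableAt_const _)]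
  have hess_mulVec : hess h y *ᵥ d = fun i => B (Pi.single i 1) d := funext fun i => by
    rw [(B (Pi.single i 1)).apply_eq_dotProduct d, dotProduct_comm]
    simp only [mulVec, hess_eq]
  rw [hess_mulVec]
  exact ((B.flip d).apply_eq_dotProduct d).symm

lemma dotProduct_PH_mulVec {n : ℕ} {d : Fin n → ℝ} (hd : ∑ i, d i = 0) (g : Fin n → ℝ) :
    d ⬝ᵥ (PH n *ᵥ g) = d ⬝ᵥ g := by
  have : d ⬝ᵥ ((of fun _ _ => (1 : ℝ)) *ᵥ g) = 0 := by
    simp [mulVec, dotProduct, ← Finset.sum_mul, hd]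
  rw [PH, sub_mulVec, one_mulVec, dotProduct_sub, smul_mulVec, dotProduct_smul, this,
    smul_zero, sub_zero]

lemma convex_simplex (n : ℕ) : Convex ℝ (simplex n) :=
  convex_stdSimplex ℝ (Fin n)

lemma simplexInt_subset_simplex (n : ℕ) : simplexInt n ⊆ simplex n :=
  fun _ hx => ⟨fun i => (hx.1 i).le, hx.2⟩

lemma smul_add_smul_mem_simplexInt {n : ℕ} {x y : Fin n → ℝ} (hx : x ∈ simplexInt n)
    (hy : y ∈ simplex n) {a b : ℝ} (ha : 0 < a) (hb : 0 ≤ b) (hab : a + b = 1) :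
    a • x + b • y ∈ simplexInt n := by
  refine ⟨fun i => ?_, ?_⟩
  · simp only [Pi.add_apply, Pi.smul_apply, smul_eq_mul]
    exact add_pos_of_pos_of_nonneg (mul_pos ha (hx.1 i)) (mul_nonneg hb (hy.1 i))
  · simp only [Pi.add_apply, Pi.smul_apply, smul_eq_mul, Finset.sum_add_distrib,
      ← Finset.mul_sum, hx.2, hy.2, mul_one, hab]

lemma convex_simplexInt (n : ℕ) : Convex ℝ (simplexInt n) :=
  fun _ hx _ hy _ _ ha hb hab =>
    ⟨fun i => convex_Ioi (0 : ℝ) (hx.1 i) (hy.1 i) ha hb hab,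
      (convex_simplex n (simplexInt_subset_simplex n hx) (simplexInt_subset_simplex n hy)
        ha hb hab).2⟩

section NormedSpace

variable {E : Type*} [NormedAddCommGroup E] [NormedSpace ℝ E] {f : E → ℝ} {s : Set E}

lemma ConvexOn.fderiv_apply_sub_le (hf : ConvexOn ℝ s f) {x y : E} (hx : x ∈ s) (hy : y ∈ s)
    (hfx : DifferentiableAt ℝ f x) : fderiv ℝ f x (y - x) ≤ f y - f x := by
  have hline : ConvexOn ℝ (Set.Icc (0 : ℝ) 1) (f ∘ AffineMap.lineMap x y) :=
    (hf.comp_affineMap _).subset (fun t ht => hf.1.lineMap_mem hx hy ht) (convex_Icc 0 1)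
  have hderiv :
      HasDerivAt (f ∘ AffineMap.lineMap (k := ℝ) x y) (fderiv ℝ f x (y - x)) (0 : ℝ) := by
    have hfx' : HasFDerivAt f (fderiv ℝ f x) (AffineMap.lineMap x y (0 : ℝ)) := by
      simpa using hfx.hasFDerivAt
    exact hfx'.comp_hasDerivAt 0 AffineMap.hasDerivAt_lineMap
  simpa [slope_def_field] using
    hline.le_slope_of_hasDerivAt (Set.left_mem_Icc.2 zero_le_one)
      (Set.right_mem_Icc.2 zero_le_one) zero_lt_one hderiv

variable {U : Set E}

lemma ContDiffOn.differentiableAt_fderiv (hf : ContDiffOn ℝ 2 f U) (hU : IsOpen U) {x : E}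
    (hx : x ∈ U) : DifferentiableAt ℝ (fderiv ℝ f) x :=
  ((hf.contDiffAt (hU.mem_nhds hx)).fderiv_right (m := 1) le_rfl).differentiableAt one_ne_zero

lemma deriv2_comp_lineMap (hU : IsOpen U) (hf : ContDiffOn ℝ 2 f U) {x y : E} {t : ℝ}
    (ht : AffineMap.lineMap x y t ∈ U) :
    deriv^[2] (f ∘ AffineMap.lineMap x y) t =
      fderiv ℝ (fderiv ℝ f) (AffineMap.lineMap x y t) (y - x) (y - x) := by
  set c : ℝ → E := ⇑(AffineMap.lineMap (k := ℝ) x y)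
  have hc : ∀ r, HasDerivAt c (y - x) r := fun r => AffineMap.hasDerivAt_lineMap
  have hderiv : deriv (f ∘ c) =ᶠ[nhds t] fun r => fderiv ℝ f (c r) (y - x) := by
    filter_upwards [(hU.preimage AffineMap.lineMap_continuous).mem_nhds ht] with r hr
    exact ((hf.differentiableOn two_ne_zero).differentiableAt
      (hU.mem_nhds hr)).hasFDerivAt.comp_hasDerivAt r (hc r) |>.deriv
  have hderiv2 : HasDerivAt (fun r => fderiv ℝ f (c r) (y - x))
      (fderiv ℝ (fderiv ℝ f) (c t) (y - x) (y - x)) t :=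
    ((hf.differentiableAt_fderiv hU ht).hasFDerivAt.comp_hasDerivAt t (hc t)).clm_apply
      (hasDerivAt_const t (y - x)) |>.congr_deriv (by simp)
  rw [Function.iterate_succ_apply, Function.iterate_one, hderiv.deriv_eq, hderiv2.deriv]

lemma strictConvexOn_of_fderiv2_pos (hs : Convex ℝ s) (hU : IsOpen U) (hsU : s ⊆ U)
    (hf : ContDiffOn ℝ 2 f U) (hpos : ∀ x ∈ s, ∀ v ≠ 0, 0 < fderiv ℝ (fderiv ℝ f) x v v) :
    StrictConvexOn ℝ s f := by
  refine ⟨hs, fun x hx y hy hxy a b ha hb hab => ?_⟩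
  have hmem : ∀ t ∈ Set.Icc (0 : ℝ) 1, AffineMap.lineMap x y t ∈ s :=
    fun t ht => hs.lineMap_mem hx hy ht
  have hline : StrictConvexOn ℝ (Set.Icc (0 : ℝ) 1) (f ∘ AffineMap.lineMap x y) := by
    refine strictConvexOn_of_deriv2_pos (convex_Icc 0 1)
      (hf.continuousOn.comp AffineMap.lineMap_continuous.continuousOn fun t ht => hsU (hmem t ht))
      fun t ht => ?_
    rw [interior_Icc] at ht
    have hts := hmem t (Set.Ioo_subset_Icc_self ht)
    rw [deriv2_comp_lineMap hU hf (hsU hts)]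
    exact hpos _ hts _ (sub_ne_zero.2 hxy.symm)
  have hb' : 1 - b = a := by linarith
  simpa [AffineMap.lineMap_apply_module, hb'] using
    hline.2 (Set.left_mem_Icc.2 zero_le_one) (Set.right_mem_Icc.2 zero_le_one) zero_ne_one
      ha hb hab

end NormedSpace

lemma ConcaveOn.eq_of_isMaxOn_of_strictConcaveOn {E : Type*} [AddCommGroup E] [Module ℝ E]
    {f : E → ℝ} {s t : Set E} (hf : ConcaveOn ℝ s f) (hft : StrictConcaveOn ℝ t f)
    (hts : t ⊆ s) {x y : E} (hx : x ∈ t) (hy : y ∈ s)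
    (hmid : (2 : ℝ)⁻¹ • x + (2 : ℝ)⁻¹ • y ∈ t) (hfx : IsMaxOn f s x) (hfy : IsMaxOn f s y) :
    y = x := by
  set m := (2 : ℝ)⁻¹ • x + (2 : ℝ)⁻¹ • y
  have hfm : IsMaxOn f s m := isMaxOn_iff.2 fun z hz => by
    have hxy : f x ≤ f y := hfy (hts hx)
    have hconc : (2 : ℝ)⁻¹ • f x + (2 : ℝ)⁻¹ • f y ≤ f m :=
      hf.2 (hts hx) hy (by norm_num) (by norm_num) (by norm_num)
    simp only [smul_eq_mul] at hconc
    linarith [isMaxOn_iff.1 hfx z hz]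
  have hxm : x = m := hft.eq_of_isMaxOn (hfx.on_subset hts) (hfm.on_subset hts) hx hmid
  calc y = (2 : ℝ) • m - x := by module
    _ = x := by rw [← hxm]; module

lemma isMaxOn_simplex_of_PH_grad_eq {n : ℕ} {h : (Fin n → ℝ) → ℝ}
    (hconv : ConvexOn ℝ (simplex n) h) {x₀ : Fin n → ℝ} (hx₀ : x₀ ∈ simplexInt n)
    (hd : DifferentiableAt ℝ h x₀) :
    IsMaxOn (fun x => x ⬝ᵥ (PH n *ᵥ grad h x₀) - h x) (simplex n) x₀ := by
  refine isMaxOn_iff.2 fun x hx => ?_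
  have hsum : ∑ i, (x - x₀) i = 0 := by
    simp only [Pi.sub_apply, Finset.sum_sub_distrib, hx.2, hx₀.2, sub_self]
  have hfirst := hconv.fderiv_apply_sub_le (simplexInt_subset_simplex n hx₀) hx hd
  rw [fderiv_apply_eq_dotProduct_grad, ← dotProduct_PH_mulVec hsum, sub_dotProduct] at hfirst
  linarith

lemma eq_of_isMaxOn_simplex {n : ℕ} {h : (Fin n → ℝ) → ℝ} (hconv : ConvexOn ℝ (simplex n) h)
    (hstrict : StrictConvexOn ℝ (simplexInt n) h) {z x₀ x : Fin n → ℝ}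
    (hx₀ : x₀ ∈ simplexInt n) (hx : x ∈ simplex n)
    (hmax₀ : IsMaxOn (fun x => x ⬝ᵥ z - h x) (simplex n) x₀)
    (hmax : IsMaxOn (fun x => x ⬝ᵥ z - h x) (simplex n) x) : x = x₀ :=
  ConcaveOn.eq_of_isMaxOn_of_strictConcaveOn
    ((((dotProductBilin ℝ ℝ).flip z).concaveOn (convex_simplex n)).sub hconv)
    ((((dotProductBilin ℝ ℝ).flip z).concaveOn (convex_simplexInt n)).sub_strictConvexOn hstrict)
    (simplexInt_subset_simplex n) hx₀ hx
    (smul_add_smul_mem_simplexInt hx₀ hx (by norm_num) (by norm_num) (by norm_num)) hmax₀ hmax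

theorem stmt4_general {n : ℕ} (h : (Fin n → ℝ) → ℝ)
    (hconv : ConvexOn ℝ (simplex n) h)
    (U : Set (Fin n → ℝ)) (hU : IsOpen U) (hUsub : simplexInt n ⊆ U)
    (hC2 : ContDiffOn ℝ 2 h U)
    (hpos : ∀ x ∈ simplexInt n, ∀ v : Fin n → ℝ, v ≠ 0 → 0 < v ⬝ᵥ (hess h x *ᵥ v)) :
    Set.BijOn (fun x => PH n *ᵥ grad h x) (simplexInt n)
      ((fun x => PH n *ᵥ grad h x) '' simplexInt n) ∧
    ∀ z ∈ (fun x => PH n *ᵥ grad h x) '' simplexInt n,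
      ∃ x₀ ∈ simplexInt n, PH n *ᵥ grad h x₀ = z ∧
        (∀ x ∈ simplex n, x ⬝ᵥ z - h x ≤ x₀ ⬝ᵥ z - h x₀) ∧
        (∀ x ∈ simplex n, (∀ x' ∈ simplex n, x' ⬝ᵥ z - h x' ≤ x ⬝ᵥ z - h x) → x = x₀) := by
  have hstrict : StrictConvexOn ℝ (simplexInt n) h :=
    strictConvexOn_of_fderiv2_pos (convex_simplexInt n) hU hUsub hC2 fun x hx v hv => by
      rw [← dotProduct_hess_mulVec (hC2.differentiableAt_fderiv hU (hUsub hx))]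
      exact hpos x hx v hv
  have hmax (x₀ : Fin n → ℝ) (hx₀ : x₀ ∈ simplexInt n) :
      IsMaxOn (fun x => x ⬝ᵥ (PH n *ᵥ grad h x₀) - h x) (simplex n) x₀ :=
    isMaxOn_simplex_of_PH_grad_eq hconv hx₀
      ((hC2.differentiableOn two_ne_zero).differentiableAt (hU.mem_nhds (hUsub hx₀)))
  refine ⟨Set.InjOn.bijOn_image fun a ha b hb hab => ?_, ?_⟩
  · exact eq_of_isMaxOn_simplex hconv hstrict hb (simplexInt_subset_simplex n ha) (hmax b hb)
      (hab ▸ hmax a ha)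
  · rintro z ⟨x₀, hx₀, rfl⟩
    exact ⟨x₀, hx₀, rfl, isMaxOn_iff.1 (hmax x₀ hx₀), fun x hx hxmax =>
      eq_of_isMaxOn_simplex hconv hstrict hx₀ hx (hmax x₀ hx₀) (isMaxOn_iff.2 hxmax)⟩

/-- (Lemma 2 of the paper, inverse characterization.) Under the stated
hypotheses on `h`, (i) `x ↦ P_H ∇h(x)` is a bijection from `Δ_n°` onto
`M = {P_H ∇h(x) : x ∈ Δ_n°}`; and (ii) for every `z ∈ M` the function `x ↦ ⟨x, z⟩ - h x`
has a unique maximizer over `Δ_n`, this maximizer lies in `Δ_n°` and is exactly the unique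
`x ∈ Δ_n°` with `P_H ∇h(x) = z`. -/
theorem stmt4 {n : ℕ} (hn : 2 ≤ n) (h : (Fin n → ℝ) → ℝ)
    (hcont : ContinuousOn h (simplex n)) (hconv : ConvexOn ℝ (simplex n) h)
    (U : Set (Fin n → ℝ)) (hU : IsOpen U) (hUsub : simplexInt n ⊆ U)
    (hC2 : ContDiffOn ℝ 2 h U)
    (hpos : ∀ x ∈ simplexInt n, ∀ v : Fin n → ℝ, v ≠ 0 → 0 < v ⬝ᵥ (hess h x *ᵥ v)) :
    Set.BijOn (fun x => PH n *ᵥ grad h x) (simplexInt n)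
      ((fun x => PH n *ᵥ grad h x) '' simplexInt n) ∧
    ∀ z ∈ (fun x => PH n *ᵥ grad h x) '' simplexInt n,
      ∃ x₀ ∈ simplexInt n, PH n *ᵥ grad h x₀ = z ∧
        (∀ x ∈ simplex n, x ⬝ᵥ z - h x ≤ x₀ ⬝ᵥ z - h x₀) ∧
        (∀ x ∈ simplex n, (∀ x' ∈ simplex n, x' ⬝ᵥ z - h x' ≤ x ⬝ᵥ z - h x) → x = x₀) :=
  stmt4_general h hconv U hU hUsub hC2 hpos
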